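/- arXiv:1704.06775 — 4 statements merged into one kernel-verified Lean document; each statement's English description precedes it below -/
import Mathlib

section
/- If P and Q are cubic stochastic matrices of type (1,2), then P ⋆ Q, defined by (P⋆Q)_{ijk} = (1/2) ∑_{r,s} (p_{ijr} q_{rsk} + p_{ijr} q_{srk}), is again cubic stochastic of type (1,2). -/
def IsCS12 {n : ℕ} (P : Fin n → Fin n → Fin n → ℝ) : Prop :=
  (∀ i j k, 0 ≤ P i j k) ∧ (∀ k, ∑ i, ∑ j, P i j k = 1)

noncomputable def starMul {n : ℕ} (P Q : Fin n → Fin n → Fin n → ℝ) :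
    Fin n → Fin n → Fin n → ℝ :=
  fun i j k => (1/2) * ∑ r, ∑ s, (P i j r * Q r s k + P i j r * Q s r k)

theorem stmt_7 {n : ℕ} (P Q : Fin n → Fin n → Fin n → ℝ)
    (hP : IsCS12 P) (hQ : IsCS12 Q) : IsCS12 (starMul P Q) := by
  obtain ⟨hP1, hP2⟩ := hP
  obtain ⟨hQ1, hQ2⟩ := hQ
  constructor
  · intro i j k
    apply mul_nonneg (by norm_num)
    apply Finset.sum_nonneg; intro r _
    apply Finset.sum_nonneg; intro s _
    exact add_nonneg (mul_nonneg (hP1 _ _ _) (hQ1 _ _ _))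
      (mul_nonneg (hP1 _ _ _) (hQ1 _ _ _))
  · intro k
    have key : ∑ i, ∑ j, starMul P Q i j k
        = (1/2) * ∑ r, (∑ i, ∑ j, P i j r) * (∑ s, (Q r s k + Q s r k)) := by
      simp only [starMul, ← Finset.mul_sum, ← mul_add]
      congr 1
      rw [Finset.sum_congr rfl fun (i : Fin n) _ => Finset.sum_comm (f := fun j r => P i j r * ∑ s, (Q r s k + Q s r k))]
      rw [Finset.sum_comm]
      refine Finset.sum_congr rfl fun r _ => ?_
      simp only [Finset.sum_mul]
    rw [key]
    have : ∀ r : Fin n, (∑ s, (Q r s k + Q s r k)) = (∑ s, Q r s k) + ∑ s, Q s r k := by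
      intro r; rw [Finset.sum_add_distrib]
    simp only [this, hP2, one_mul]
    rw [Finset.sum_add_distrib, hQ2 k, Finset.sum_comm, hQ2 k]
    norm_num
end

section
/- The ⋆ multiplication on n×n×n real cubic matrices, (P⋆Q)_{ijk} = (1/2) ∑_{r,s} (p_{ijr} q_{rsk} + p_{ijr} q_{srk}), is associative. -/
noncomputable def symmMid {n : ℕ} (Q : Fin n → Fin n → Fin n → ℝ) :
    Fin n → Fin n → ℝ :=
  fun r k => (1/2) * ∑ s, (Q r s k + Q s r k)

lemma starMul_eq {n : ℕ} (P Q : Fin n → Fin n → Fin n → ℝ) (i j k : Fin n) :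
    starMul P Q i j k = ∑ r, P i j r * symmMid Q r k := by
  simp only [starMul, symmMid, Finset.mul_sum]
  refine Finset.sum_congr rfl fun r _ => Finset.sum_congr rfl fun s _ => by ring

lemma symmMid_starMul {n : ℕ} (P Q : Fin n → Fin n → Fin n → ℝ) (r k : Fin n) :
    symmMid (starMul P Q) r k = ∑ t, symmMid P r t * symmMid Q t k := by
  show (1/2) * ∑ s, (starMul P Q r s k + starMul P Q s r k) = _
  simp only [starMul_eq]
  rw [Finset.mul_sum]
  calc ∑ s, (1/2) * ((∑ t, P r s t * symmMid Q t k) + ∑ t, P s r t * symmMid Q t k)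
      = ∑ s, ∑ t, (1/2) * ((P r s t + P s r t) * symmMid Q t k) := by
        refine Finset.sum_congr rfl fun s _ => ?_
        rw [← Finset.sum_add_distrib, Finset.mul_sum]
        exact Finset.sum_congr rfl fun t _ => by ring
    _ = ∑ t, ∑ s, (1/2) * ((P r s t + P s r t) * symmMid Q t k) := Finset.sum_comm
    _ = ∑ t, symmMid P r t * symmMid Q t k := by
        refine Finset.sum_congr rfl fun t _ => ?_
        show _ = (1/2) * (∑ s, (P r s t + P s r t)) * symmMid Q t k
        rw [Finset.mul_sum, Finset.sum_mul]
        exact Finset.sum_congr rfl fun s _ => by ring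

theorem stmt_8 {n : ℕ} (A B C : Fin n → Fin n → Fin n → ℝ) :
    starMul (starMul A B) C = starMul A (starMul B C) := by
  funext i j k
  rw [starMul_eq, starMul_eq]
  calc ∑ r, starMul A B i j r * symmMid C r k
      = ∑ r, (∑ t, A i j t * symmMid B t r) * symmMid C r k := by
        simp only [starMul_eq]
    _ = ∑ r, ∑ t, A i j t * symmMid B t r * symmMid C r k := by
        simp only [Finset.sum_mul]
    _ = ∑ t, ∑ r, A i j t * symmMid B t r * symmMid C r k := Finset.sum_comm
    _ = ∑ t, A i j t * symmMid (starMul B C) t k := by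
        refine Finset.sum_congr rfl fun t _ => ?_
        rw [symmMid_starMul, Finset.mul_sum]
        exact Finset.sum_congr rfl fun r _ => by ring
end

section
/- For each weighting (λ₁, λ₂) with λ₁, λ₂ ≥ 0 and λ₁+λ₂ = 1, the weighted multiplication ⋆_{(λ₁,λ₂)} on n×n×n real cubic matrices is associative. -/
def wMul {n : ℕ} (l1 l2 : ℝ) (P Q : Fin n → Fin n → Fin n → ℝ) :
    Fin n → Fin n → Fin n → ℝ :=
  fun i j k => ∑ r, ∑ s, P i j r * (l1 * Q r s k + l2 * Q s r k)

theorem stmt_11 {n : ℕ} (l1 l2 : ℝ) (h1 : 0 ≤ l1) (h2 : 0 ≤ l2) (hsum : l1 + l2 = 1)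
    (A B C : Fin n → Fin n → Fin n → ℝ) :
    wMul l1 l2 (wMul l1 l2 A B) C = wMul l1 l2 A (wMul l1 l2 B C) := by
  let F : (Fin n → Fin n → Fin n → ℝ) → Fin n → Fin n → ℝ :=
    fun Q r k => ∑ s, (l1 * Q r s k + l2 * Q s r k)
  have key : ∀ (P Q : Fin n → Fin n → Fin n → ℝ) i j k,
      wMul l1 l2 P Q i j k = ∑ r, P i j r * F Q r k := by
    intro P Q i j k
    simp [wMul, F, Finset.mul_sum]
  have hFmul : ∀ t k, F (wMul l1 l2 B C) t k = ∑ r, F B t r * F C r k := by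
    intro t k
    have hFB : ∀ r, F B t r * F C r k = ∑ s, (l1 * B t s r + l2 * B s t r) * F C r k := by
      intro r
      rw [show F B t r = ∑ s, (l1 * B t s r + l2 * B s t r) from rfl, Finset.sum_mul]
    show ∑ s, (l1 * wMul l1 l2 B C t s k + l2 * wMul l1 l2 B C s t k) = _
    simp only [key, hFB, Finset.mul_sum, ← Finset.sum_add_distrib]
    rw [Finset.sum_comm]
    refine Finset.sum_congr rfl fun r _ => Finset.sum_congr rfl fun s _ => ?_
    ring
  funext i j k
  rw [key, key]
  simp only [key, hFmul, Finset.sum_mul, Finset.mul_sum]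
  rw [Finset.sum_comm]
  refine Finset.sum_congr rfl fun t _ => Finset.sum_congr rfl fun r _ => ?_
  ring
end

section
/- For A a nonnegative column stochastic matrix and P a cubic stochastic matrix of type (1,2): the first accompanying matrix of A ⊛₁ P equals A times the first accompanying matrix of P, while the second accompanying matrix of A ⊛₁ P equals the second accompanying matrix of P (i.e., it is invariant). -/
def act1 {n : ℕ} (A : Matrix (Fin n) (Fin n) ℝ) (P : Fin n → Fin n → Fin n → ℝ) :
    Fin n → Fin n → Fin n → ℝ :=
  fun i s t => ∑ r, A i r * P r s t

def acc1 {n : ℕ} (P : Fin n → Fin n → Fin n → ℝ) : Matrix (Fin n) (Fin n) ℝ :=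
  fun i k => ∑ j, P i j k

def acc2 {n : ℕ} (P : Fin n → Fin n → Fin n → ℝ) : Matrix (Fin n) (Fin n) ℝ :=
  fun j k => ∑ i, P i j k

theorem stmt_19 {n : ℕ} (A : Matrix (Fin n) (Fin n) ℝ)
    (hA1 : ∀ i j, 0 ≤ A i j) (hA2 : ∀ j, ∑ i, A i j = 1)
    (P : Fin n → Fin n → Fin n → ℝ) (hP : IsCS12 P) :
    acc1 (act1 A P) = A * acc1 P ∧ acc2 (act1 A P) = acc2 P := by
  constructor
  · ext i k
    simp only [acc1, act1, Matrix.mul_apply]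
    rw [Finset.sum_comm]
    simp [Finset.mul_sum]
  · ext j k
    simp only [acc2, act1]
    rw [Finset.sum_comm]
    simp only [← Finset.sum_mul, hA2, one_mul]
end
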